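/- arXiv:math/0011180 — 2 statements merged into one kernel-verified Lean document; each statement's English description precedes it below -/
import Mathlib

section
/- Fix integers k ≥ 1 and m ≥ 1, and let T be the ℚ-linear endomorphism of the free ℚ-module (Fin m → Fin k) →₀ ℚ induced by the cyclic shift σ. Then the kernel of (id + T) is exactly the ℚ-span of the alternating orbit sums of the words of even exact period: ker(id + T) = span_ℚ { ∑_{i=0}^{d(w)−1} (−1)^i T^i (single w) : w a word whose exact period d(w) is even }. In particular an element y satisfies T y = −y if and only if y is a ℚ-linear combination of elements of the form x̄̄ = x − Tx + T²x − ⋯ − T^{d−1}x with x a basis word of even period d. -/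
/-- The cyclic shift on words of length `m` in `k` letters: `(σ w) i = w (i + 1)`
(for `m ≥ 1`, `finRotate m i = i + 1`). -/
def cyclicShift {k m : ℕ} (w : Fin m → Fin k) : Fin m → Fin k :=
  fun i => w (finRotate m i)

/-- The linear endomorphism of the free `ℚ`-module on the words induced by the cyclic
shift: it sends the basis vector of `w` to the basis vector of `σ w`. -/
noncomputable def shiftMap (k m : ℕ) : Module.End ℚ ((Fin m → Fin k) →₀ ℚ) :=
  Finsupp.lmapDomain ℚ ℚ cyclicShift

namespace CycAux

variable {k m : ℕ}

lemma cyclicShift_injective : Function.Injective (cyclicShift (k := k) (m := m)) := by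
  intro a b h
  funext i
  have := congrFun h ((finRotate m).symm i)
  simp only [cyclicShift, Equiv.apply_symm_apply] at this
  exact this

lemma cyclicShift_surjective : Function.Surjective (cyclicShift (k := k) (m := m)) := by
  intro u
  refine ⟨fun i => u ((finRotate m).symm i), ?_⟩
  funext i
  simp only [cyclicShift, Equiv.symm_apply_apply]

lemma shiftMap_apply_single (w : Fin m → Fin k) :
    shiftMap k m (Finsupp.single w (1 : ℚ)) = Finsupp.single (cyclicShift w) 1 := by
  simp [shiftMap, Finsupp.mapDomain_single]

lemma shiftMap_pow_single (i : ℕ) (w : Fin m → Fin k) :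
    (shiftMap k m ^ i) (Finsupp.single w (1 : ℚ)) =
      Finsupp.single (cyclicShift^[i] w) 1 := by
  induction i generalizing w with
  | zero => simp
  | succ p ih =>
      rw [pow_succ', Module.End.mul_apply, ih, shiftMap_apply_single,
        ← Function.iterate_succ_apply' cyclicShift p w]

lemma shiftMap_apply_shift (y : (Fin m → Fin k) →₀ ℚ) (u : Fin m → Fin k) :
    (shiftMap k m y) (cyclicShift u) = y u :=
  Finsupp.mapDomain_apply cyclicShift_injective y u

lemma mem_ker_iff (y : (Fin m → Fin k) →₀ ℚ) :
    y ∈ LinearMap.ker (LinearMap.id + shiftMap k m) ↔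
      ∀ u, y (cyclicShift u) = - y u := by
  rw [LinearMap.mem_ker]
  constructor
  · intro h u
    have h2 := DFunLike.congr_fun h (cyclicShift u)
    rw [LinearMap.add_apply, Finsupp.add_apply, LinearMap.id_apply,
      shiftMap_apply_shift, Finsupp.coe_zero, Pi.zero_apply] at h2
    linarith
  · intro h
    ext u
    obtain ⟨u', rfl⟩ := cyclicShift_surjective u
    rw [LinearMap.add_apply, Finsupp.add_apply, LinearMap.id_apply,
      shiftMap_apply_shift, h u']
    simp

open Fin.NatCast in
lemma iterate_apply {n : ℕ} (i : ℕ) (w : Fin (n + 1) → Fin k) (j : Fin (n + 1)) :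
    (cyclicShift^[i] w) j = w (j + (i : Fin (n + 1))) := by
  induction i generalizing w with
  | zero => simp
  | succ p ih =>
      rw [Function.iterate_succ_apply, ih]
      show w (finRotate (n + 1) (j + (p : Fin (n + 1)))) = _
      rw [finRotate_succ_apply]
      congr 1
      push_cast
      rw [add_assoc]

open Fin.NatCast in
lemma isPeriodicPt {n : ℕ} (w : Fin (n + 1) → Fin k) :
    Function.IsPeriodicPt cyclicShift (n + 1) w := by
  have : cyclicShift^[n + 1] w = w := by
    funext j
    rw [iterate_apply]
    rw [Fin.natCast_self, add_zero]
  exact this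

lemma minPeriod_pos {n : ℕ} (w : Fin (n + 1) → Fin k) :
    0 < Function.minimalPeriod cyclicShift w :=
  (isPeriodicPt w).minimalPeriod_pos (Nat.succ_pos n)

/-- The alternating orbit sum. -/
noncomputable def alt (k m : ℕ) (w : Fin m → Fin k) : (Fin m → Fin k) →₀ ℚ :=
  ∑ i ∈ Finset.range (Function.minimalPeriod cyclicShift w),
    ((-1 : ℚ) ^ i) • (shiftMap k m ^ i) (Finsupp.single w (1 : ℚ))

lemma alt_apply (w u : Fin m → Fin k) :
    alt k m w u = ∑ i ∈ Finset.range (Function.minimalPeriod cyclicShift w),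
      (if cyclicShift^[i] w = u then (-1 : ℚ) ^ i else 0) := by
  rw [alt, Finsupp.finset_sum_apply]
  refine Finset.sum_congr rfl fun i _ => ?_
  rw [shiftMap_pow_single, Finsupp.smul_apply, Finsupp.single_apply]
  split <;> simp

lemma alt_apply_self {n : ℕ} (w : Fin (n + 1) → Fin k) : alt k (n + 1) w w = 1 := by
  rw [alt_apply]
  rw [Finset.sum_eq_single_of_mem 0 (Finset.mem_range.mpr (minPeriod_pos w))]
  · simp
  · intro i hi hi0
    rw [if_neg]
    intro hiw
    have hdvd : Function.minimalPeriod cyclicShift w ∣ i :=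
      Function.IsPeriodicPt.minimalPeriod_dvd hiw
    have := Nat.le_of_dvd (Nat.pos_of_ne_zero hi0) hdvd
    have := Finset.mem_range.mp hi
    omega

lemma alt_apply_eq_zero (w u : Fin m → Fin k)
    (h : ∀ i < Function.minimalPeriod cyclicShift w, cyclicShift^[i] w ≠ u) :
    alt k m w u = 0 := by
  rw [alt_apply]
  apply Finset.sum_eq_zero
  intro i hi
  rw [if_neg (h i (Finset.mem_range.mp hi))]

lemma alt_mem_ker (w : Fin m → Fin k)
    (hev : Even (Function.minimalPeriod cyclicShift w)) :
    alt k m w ∈ LinearMap.ker (LinearMap.id + shiftMap k m) := by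
  rw [LinearMap.mem_ker]
  set d := Function.minimalPeriod cyclicShift w with hdd
  set g : ℕ → ((Fin m → Fin k) →₀ ℚ) :=
    fun i => ((-1 : ℚ) ^ i) • Finsupp.single (cyclicShift^[i] w) 1 with hg
  have halt : alt k m w = ∑ i ∈ Finset.range d, g i := by
    rw [alt]
    refine Finset.sum_congr rfl fun i _ => ?_
    rw [shiftMap_pow_single]
  have hT : ∀ i, shiftMap k m (g i) = - g (i + 1) := by
    intro i
    have h1 : g (i + 1)
        = (-(-1 : ℚ) ^ i) • Finsupp.single (cyclicShift (cyclicShift^[i] w)) 1 := by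
      simp only [hg]
      rw [Function.iterate_succ_apply', pow_succ, mul_neg_one, neg_smul]
    rw [h1, hg]
    simp only [map_smul, shiftMap_apply_single, neg_smul, neg_neg]
  have hper : cyclicShift^[d] w = w := Function.isPeriodicPt_minimalPeriod cyclicShift w
  rw [halt, LinearMap.add_apply, LinearMap.id_apply, map_sum,
    ← Finset.sum_add_distrib]
  have hcong : ∀ i ∈ Finset.range d, g i + shiftMap k m (g i) = g i - g (i + 1) := by
    intro i _
    rw [hT i, sub_eq_add_neg]
  rw [Finset.sum_congr rfl hcong, Finset.sum_range_sub' g]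
  simp only [hg, pow_zero, one_smul, Function.iterate_zero_apply, hper,
    Even.neg_one_pow hev]
  simp

lemma apply_iterate (y : (Fin m → Fin k) →₀ ℚ)
    (hy : ∀ u, y (cyclicShift u) = - y u) (i : ℕ) (u : Fin m → Fin k) :
    y (cyclicShift^[i] u) = (-1 : ℚ) ^ i * y u := by
  induction i generalizing u with
  | zero => simp
  | succ p ih =>
      rw [Function.iterate_succ_apply', hy, ih, pow_succ]
      ring

theorem main_aux (k n : ℕ) :
    LinearMap.ker (LinearMap.id + shiftMap k (n + 1)) =
      Submodule.span ℚ {v : (Fin (n + 1) → Fin k) →₀ ℚ |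
        ∃ w : Fin (n + 1) → Fin k, Even (Function.minimalPeriod cyclicShift w) ∧
          v = alt k (n + 1) w} := by
  apply le_antisymm
  · suffices H : ∀ (N : ℕ) (y : (Fin (n + 1) → Fin k) →₀ ℚ),
        (∀ u, y (cyclicShift u) = - y u) → y.support.card ≤ N →
        y ∈ Submodule.span ℚ {v : (Fin (n + 1) → Fin k) →₀ ℚ |
          ∃ w : Fin (n + 1) → Fin k, Even (Function.minimalPeriod cyclicShift w) ∧
            v = alt k (n + 1) w} by
      intro y hy
      exact H _ y ((mem_ker_iff y).1 hy) le_rfl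
    intro N
    induction N with
    | zero =>
        intro y hy hc
        have hy0 : y = 0 := by
          rwa [Nat.le_zero, Finset.card_eq_zero, Finsupp.support_eq_empty] at hc
        rw [hy0]
        exact Submodule.zero_mem _
    | succ N ih =>
        intro y hy hc
        by_cases h0 : y = 0
        · rw [h0]; exact Submodule.zero_mem _
        · obtain ⟨w, hw⟩ := Finsupp.support_nonempty_iff.mpr h0
          have hcw : y w ≠ 0 := Finsupp.mem_support_iff.mp hw
          have hdpos : 0 < Function.minimalPeriod cyclicShift w := minPeriod_pos w
          have hper : cyclicShift^[Function.minimalPeriod cyclicShift w] w = w :=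
            Function.isPeriodicPt_minimalPeriod cyclicShift w
          have hev : Even (Function.minimalPeriod cyclicShift w) := by
            have h1 := apply_iterate y hy (Function.minimalPeriod cyclicShift w) w
            rw [hper] at h1
            have h2 : (1 : ℚ) = (-1) ^ Function.minimalPeriod cyclicShift w :=
              mul_right_cancel₀ hcw (by rw [one_mul]; exact h1)
            exact (neg_one_pow_eq_one_iff_even (by norm_num : (-1 : ℚ) ≠ 1)).mp h2.symm
          set c := y w with hcc
          set y' := y - c • alt k (n + 1) w with hy'def
          have haltpt : ∀ u, (alt k (n + 1) w) (cyclicShift u) = - (alt k (n + 1) w) u :=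
            (mem_ker_iff _).1 (alt_mem_ker w hev)
          have hy'pt : ∀ u, y' (cyclicShift u) = - y' u := by
            intro u
            rw [hy'def]
            simp only [Finsupp.sub_apply, Finsupp.smul_apply, hy u, haltpt u,
              smul_eq_mul]
            ring
          have hsub : y'.support ⊆ y.support.erase w := by
            intro u hu
            have hu' : y' u ≠ 0 := Finsupp.mem_support_iff.mp hu
            rw [Finset.mem_erase]
            constructor
            · rintro rfl
              apply hu'
              rw [hy'def]
              simp [alt_apply_self u, hcc]
            · rw [Finsupp.mem_support_iff]
              intro hyu
              apply hu'
              have halt0 : alt k (n + 1) w u = 0 := by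
                apply alt_apply_eq_zero
                intro i hi hiw
                have h1 := apply_iterate y hy i w
                rw [hiw, hyu] at h1
                rcases mul_eq_zero.mp h1.symm with h | h
                · exact absurd h (pow_ne_zero i (by norm_num))
                · exact hcw h
              rw [hy'def]
              simp [hyu, halt0]
          have hcard : y'.support.card ≤ N := by
            have h1 := Finset.card_le_card hsub
            rw [Finset.card_erase_of_mem hw] at h1
            omega
          have hmem' := ih y' hy'pt hcard
          have haltmem : alt k (n + 1) w ∈
              Submodule.span ℚ {v : (Fin (n + 1) → Fin k) →₀ ℚ |
                ∃ w : Fin (n + 1) → Fin k,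
                  Even (Function.minimalPeriod cyclicShift w) ∧ v = alt k (n + 1) w} :=
            Submodule.subset_span ⟨w, hev, rfl⟩
          have hrec : y = y' + c • alt k (n + 1) w := by
            rw [hy'def, sub_add_cancel]
          rw [hrec]
          exact Submodule.add_mem _ hmem' (Submodule.smul_mem _ c haltmem)
  · rw [Submodule.span_le]
    rintro v ⟨w, hev, rfl⟩
    exact alt_mem_ker w hev

end CycAux

/-- Second half of Lemma 5.10: the kernel of `id + T` over `ℚ` is exactly the span of the
alternating orbit sums `x̄̄ = x − Tx + T²x − ⋯ − T^{d−1}x` over basis words `x` of even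
exact period `d`. -/
theorem ker_id_add_shift_eq_span_alternating_orbit_sums (k m : ℕ) (hk : 1 ≤ k)
    (hm : 1 ≤ m) :
    LinearMap.ker (LinearMap.id + shiftMap k m) =
      Submodule.span ℚ {v : (Fin m → Fin k) →₀ ℚ |
        ∃ w : Fin m → Fin k, Even (Function.minimalPeriod cyclicShift w) ∧
          v = ∑ i ∈ Finset.range (Function.minimalPeriod cyclicShift w),
            ((-1 : ℚ) ^ i) • (shiftMap k m ^ i) (Finsupp.single w (1 : ℚ))} := by
  obtain ⟨n, rfl⟩ : ∃ n, m = n + 1 := ⟨m - 1, by omega⟩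
  exact CycAux.main_aux k n
end

section
/- Fix integers k ≥ 1 and m ≥ 1, and let T be the ℚ-linear endomorphism of the free ℚ-module (Fin m → Fin k) →₀ ℚ induced by the cyclic shift σ. Then the ℚ-dimension of the kernel of (id + T) equals the number of orbits of σ on the words Fin m → Fin k whose exact period is even. In particular, if m is odd then id + T is injective. -/
/-- The orbit of a word `w` under the iterates of the cyclic shift. -/
def shiftOrbit {k m : ℕ} (w : Fin m → Fin k) : Set (Fin m → Fin k) :=
  {w' | ∃ j : ℕ, cyclicShift^[j] w = w'}

namespace CyclicAux

variable {k m : ℕ}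

lemma shift_inj : Function.Injective (cyclicShift (k := k) (m := m)) := by
  intro a b h
  funext i
  simpa only [cyclicShift, Equiv.apply_symm_apply] using congrFun h ((finRotate m).symm i)

lemma shift_surj : Function.Surjective (cyclicShift (k := k) (m := m)) := fun w =>
  ⟨fun i => w ((finRotate m).symm i), funext fun i => by simp only [cyclicShift, Equiv.symm_apply_apply]⟩

lemma shift_iterate_apply (j : ℕ) (w : Fin m → Fin k) (i : Fin m) :
    (cyclicShift^[j] w) i = w ((finRotate m)^[j] i) := by
  induction j generalizing w i with
  | zero => rfl
  | succ j ih =>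
      rw [Function.iterate_succ_apply, ih]
      simp [cyclicShift, Function.iterate_succ_apply']

open Fin.NatCast in
lemma finRotate_iterate (n j : ℕ) (i : Fin (n + 1)) :
    (finRotate (n + 1))^[j] i = i + (j : Fin (n + 1)) := by
  induction j with
  | zero => simp
  | succ j ih =>
      rw [Function.iterate_succ_apply', ih, finRotate_succ_apply, Nat.cast_add,
        Nat.cast_one, add_assoc]

open Fin.NatCast in
lemma shift_iterate_m (hm : 1 ≤ m) (w : Fin m → Fin k) :
    cyclicShift^[m] w = w := by
  obtain ⟨n, rfl⟩ : ∃ n, m = n + 1 := ⟨m - 1, by omega⟩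
  funext i
  rw [shift_iterate_apply, finRotate_iterate]
  simp

lemma isPeriodic (hm : 1 ≤ m) (w : Fin m → Fin k) :
    Function.IsPeriodicPt cyclicShift m w := shift_iterate_m hm w

lemma mem_periodicPts (hm : 1 ≤ m) (w : Fin m → Fin k) :
    w ∈ Function.periodicPts cyclicShift := ⟨m, hm, isPeriodic hm w⟩

lemma minPeriod_pos (hm : 1 ≤ m) (w : Fin m → Fin k) :
    0 < Function.minimalPeriod cyclicShift w :=
  Function.minimalPeriod_pos_of_mem_periodicPts (mem_periodicPts hm w)

lemma minPeriod_dvd (hm : 1 ≤ m) (w : Fin m → Fin k) :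
    Function.minimalPeriod cyclicShift w ∣ m :=
  (isPeriodic hm w).minimalPeriod_dvd

lemma mem_orbit_self (w : Fin m → Fin k) : w ∈ shiftOrbit w := ⟨0, rfl⟩

lemma orbit_symm (hm : 1 ≤ m) {w w' : Fin m → Fin k} (h : w' ∈ shiftOrbit w) :
    w ∈ shiftOrbit w' := by
  obtain ⟨j, rfl⟩ := h
  refine ⟨j * m - j, ?_⟩
  rw [← Function.iterate_add_apply]
  have hj : j * m - j + j = j * m := by
    have : j ≤ j * m := Nat.le_mul_of_pos_right _ hm
    omega
  rw [hj]
  exact (isPeriodic hm w).const_mul j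

lemma orbit_eq (hm : 1 ≤ m) {w w' : Fin m → Fin k} (h : w' ∈ shiftOrbit w) :
    shiftOrbit w' = shiftOrbit w := by
  ext v
  constructor
  · rintro ⟨i, rfl⟩
    obtain ⟨j, hj⟩ := h
    exact ⟨i + j, by rw [Function.iterate_add_apply, hj]⟩
  · rintro ⟨i, rfl⟩
    obtain ⟨j, hj⟩ := orbit_symm hm h
    exact ⟨i + j, by rw [Function.iterate_add_apply, hj]⟩

lemma minPeriod_congr (hm : 1 ≤ m) {w w' : Fin m → Fin k} (h : w' ∈ shiftOrbit w) :
    Function.minimalPeriod cyclicShift w' = Function.minimalPeriod cyclicShift w := by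
  obtain ⟨j, rfl⟩ := h
  exact Function.minimalPeriod_apply_iterate (mem_periodicPts hm w) j

lemma exists_lt_of_mem_orbit (hm : 1 ≤ m) {w v : Fin m → Fin k} (h : v ∈ shiftOrbit w) :
    ∃ j, j < Function.minimalPeriod cyclicShift w ∧ cyclicShift^[j] w = v := by
  obtain ⟨j, rfl⟩ := h
  exact ⟨j % Function.minimalPeriod cyclicShift w, Nat.mod_lt _ (minPeriod_pos hm w),
    Function.iterate_mod_minimalPeriod_eq⟩

lemma mem_ker_iff (x : (Fin m → Fin k) →₀ ℚ) :
    x ∈ LinearMap.ker (LinearMap.id + shiftMap k m) ↔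
      ∀ w, x (cyclicShift w) = - x w := by
  rw [LinearMap.mem_ker]
  constructor
  · intro h w
    have h1 := DFunLike.congr_fun h (cyclicShift w)
    simp only [LinearMap.add_apply, LinearMap.id_apply, shiftMap,
      Finsupp.lmapDomain_apply, Finsupp.add_apply,
      Finsupp.mapDomain_apply shift_inj, Finsupp.coe_zero, Pi.zero_apply] at h1
    linarith
  · intro h
    ext v
    obtain ⟨w, rfl⟩ := shift_surj v
    simp only [LinearMap.add_apply, LinearMap.id_apply, shiftMap,
      Finsupp.lmapDomain_apply, Finsupp.add_apply,
      Finsupp.mapDomain_apply shift_inj, Finsupp.coe_zero, Pi.zero_apply]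
    rw [h w]; ring

lemma ker_iterate {x : (Fin m → Fin k) →₀ ℚ} (hx : ∀ w, x (cyclicShift w) = - x w)
    (j : ℕ) (w : Fin m → Fin k) : x (cyclicShift^[j] w) = (-1) ^ j * x w := by
  induction j with
  | zero => simp
  | succ j ih => rw [Function.iterate_succ_apply', hx, ih, pow_succ]; ring

end CyclicAux

open CyclicAux in
/-- The `ℚ`-dimension of `ker(id + T)` equals the number of orbits of the cyclic shift
whose exact period is even; in particular if `m` is odd then `id + T` is injective. -/
theorem finrank_ker_id_add_shift (k m : ℕ) (hk : 1 ≤ k) (hm : 1 ≤ m) :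
    Module.finrank ℚ (LinearMap.ker (LinearMap.id + shiftMap k m)) =
      Set.ncard {S : Set (Fin m → Fin k) |
        ∃ w : Fin m → Fin k, Even (Function.minimalPeriod cyclicShift w) ∧
          S = shiftOrbit w} ∧
    (Odd m → Function.Injective
      ((LinearMap.id + shiftMap k m : Module.End ℚ ((Fin m → Fin k) →₀ ℚ)) : _ → _)) := by
  classical
  constructor
  · set O : Set (Set (Fin m → Fin k)) :=
      {S | ∃ w, Even (Function.minimalPeriod cyclicShift w) ∧ S = shiftOrbit w} with hO
    haveI : Fintype ↥O := Fintype.ofFinite _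
    have hrep : ∀ S : ↥O, ∃ w, Even (Function.minimalPeriod cyclicShift w) ∧
        (S : Set (Fin m → Fin k)) = shiftOrbit w := fun S => S.2
    choose r hre hrO using hrep
    set d : ↥O → ℕ := fun S => Function.minimalPeriod cyclicShift (r S) with hd
    have hdpos : ∀ S, 0 < d S := fun S => minPeriod_pos hm (r S)
    set b0 : ↥O → ((Fin m → Fin k) →₀ ℚ) := fun S =>
      ∑ j ∈ Finset.range (d S), ((-1 : ℚ) ^ j) • Finsupp.single (cyclicShift^[j] (r S)) 1
      with hb0
    have hb0apply : ∀ S v, b0 S v =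
        ∑ j ∈ Finset.range (d S),
          ((-1 : ℚ) ^ j) * (if cyclicShift^[j] (r S) = v then 1 else 0) := by
      intro S v
      rw [hb0]
      rw [Finsupp.finset_sum_apply]
      refine Finset.sum_congr rfl fun j _ => ?_
      rw [Finsupp.smul_apply, Finsupp.single_apply, smul_eq_mul]
    have hb0iter : ∀ S j, j < d S → b0 S (cyclicShift^[j] (r S)) = (-1 : ℚ) ^ j := by
      intro S j hj
      rw [hb0apply]
      rw [Finset.sum_eq_single j]
      · simp
      · intro i hi hne
        rw [if_neg, mul_zero]
        intro hij
        exact hne (Function.iterate_injOn_Iio_minimalPeriod (Finset.mem_range.mp hi) hj hij)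
      · intro h; exact absurd (Finset.mem_range.mpr hj) h
    have hb0notmem : ∀ (S : ↥O) (v : Fin m → Fin k),
        v ∉ (S : Set (Fin m → Fin k)) → b0 S v = 0 := by
      intro S v hv
      rw [hb0apply]
      apply Finset.sum_eq_zero
      intro j _
      rw [if_neg, mul_zero]
      intro hjv
      exact hv (by rw [hrO S]; exact ⟨j, hjv⟩)
    have hb0ker : ∀ S, b0 S ∈ LinearMap.ker (LinearMap.id + shiftMap k m) := by
      intro S
      rw [mem_ker_iff]
      intro w
      by_cases hw : w ∈ (S : Set (Fin m → Fin k))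
      · rw [hrO S] at hw
        obtain ⟨j, hjlt, rfl⟩ := exists_lt_of_mem_orbit hm hw
        have hjlt' : j < d S := hjlt
        have hsucc : cyclicShift^[j + 1] (r S) = cyclicShift (cyclicShift^[j] (r S)) :=
          Function.iterate_succ_apply' _ _ _
        rcases Nat.lt_or_ge (j + 1) (d S) with h1 | h1
        · rw [← hsucc, hb0iter S (j + 1) h1, hb0iter S j hjlt', pow_succ]
          ring
        · have hj1 : j + 1 = d S := by omega
          have hcyc : cyclicShift (cyclicShift^[j] (r S)) = r S := by
            rw [← hsucc, hj1]
            exact Function.iterate_minimalPeriod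
          rw [hcyc]
          have h0 := hb0iter S 0 (hdpos S)
          rw [pow_zero] at h0
          have hb1 : b0 S (r S) = 1 := h0
          rw [hb1, hb0iter S j hjlt']
          have hodd : Odd j := by
            have heven : Even (d S) := hre S
            have hout : Odd (d S - 1) := Nat.Even.sub_odd (hdpos S) heven odd_one
            have : j = d S - 1 := by omega
            rwa [this]
          rw [hodd.neg_one_pow]; ring
      · have hw' : cyclicShift w ∉ (S : Set (Fin m → Fin k)) := by
          intro hcw
          apply hw
          rw [hrO S] at hcw ⊢
          have hmem : w ∈ shiftOrbit (cyclicShift w) := by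
            refine ⟨m - 1, ?_⟩
            have h2 : cyclicShift^[m - 1] (cyclicShift w) = cyclicShift^[m] w := by
              rw [← Function.iterate_succ_apply]
              congr 1
              omega
            rw [h2, shift_iterate_m hm]
          rw [← orbit_eq hm hcw]
          exact hmem
        rw [hb0notmem S _ hw', hb0notmem S _ hw, neg_zero]
    set bK : ↥O → ↥(LinearMap.ker (LinearMap.id + shiftMap k m)) :=
      fun S => ⟨b0 S, hb0ker S⟩ with hbK
    have hSne : ∀ S S' : ↥O, S ≠ S' → (r S') ∉ (S : Set (Fin m → Fin k)) := by
      intro S S' hne hmem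
      apply hne
      apply Subtype.ext
      rw [hrO S] at hmem
      rw [hrO S, hrO S']
      exact (orbit_eq hm hmem).symm
    have hφb : ∀ S S' : ↥O, (b0 S') (r S) = if S' = S then 1 else 0 := by
      intro S S'
      by_cases h : S' = S
      · subst h
        rw [if_pos rfl]
        have := hb0iter S' 0 (hdpos S')
        simpa using this
      · rw [if_neg h]
        exact hb0notmem S' _ (hSne S' S h)
    let φ : ↥(LinearMap.ker (LinearMap.id + shiftMap k m)) →ₗ[ℚ] (↥O → ℚ) :=
      { toFun := fun x S => (x : (Fin m → Fin k) →₀ ℚ) (r S)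
        map_add' := fun x y => by funext S; simp
        map_smul' := fun c x => by funext S; simp }
    have hli : LinearIndependent ℚ bK := by
      apply LinearIndependent.of_comp φ
      have hcomp : (φ ∘ bK) = fun S' => Pi.single S' (1 : ℚ) := by
        funext S' S
        have heq : (φ ∘ bK) S' S = (b0 S') (r S) := rfl
        rw [heq, hφb S S', Pi.single_apply]
        by_cases h : S' = S <;> simp [h, eq_comm]
      rw [hcomp]
      have := (Pi.basisFun ℚ ↥O).linearIndependent
      have hfun : ⇑(Pi.basisFun ℚ ↥O) = fun S' => Pi.single S' (1 : ℚ) := by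
        funext S'
        rw [Pi.basisFun_apply]
      rwa [hfun] at this
    have hspan : ⊤ ≤ Submodule.span ℚ (Set.range bK) := by
      rintro ⟨x, hx⟩ -
      have hxr := (mem_ker_iff x).1 hx
      have key : (⟨x, hx⟩ : ↥(LinearMap.ker (LinearMap.id + shiftMap k m))) =
          ∑ S : ↥O, x (r S) • bK S := by
        apply Subtype.ext
        rw [AddSubmonoidClass.coe_finset_sum]
        ext v
        rw [Finsupp.finset_sum_apply]
        simp only [SetLike.val_smul, Finsupp.smul_apply, smul_eq_mul, hbK]
        rcases Nat.even_or_odd (Function.minimalPeriod cyclicShift v) with hev | hod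
        · have hS₀mem : shiftOrbit v ∈ O := ⟨v, hev, rfl⟩
          set S₀ : ↥O := ⟨shiftOrbit v, hS₀mem⟩ with hS₀
          have hvS₀ : v ∈ shiftOrbit (r S₀) := by
            rw [← hrO S₀]
            exact mem_orbit_self v
          obtain ⟨j, hjlt, hjv⟩ := exists_lt_of_mem_orbit hm hvS₀
          have hjlt' : j < d S₀ := hjlt
          rw [Finset.sum_eq_single S₀]
          · rw [← hjv, hb0iter S₀ j hjlt', ker_iterate hxr j (r S₀)]
            ring
          · intro S _ hne
            rw [hb0notmem S v ?_, mul_zero]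
            intro hvS
            apply hne
            apply Subtype.ext
            rw [hrO S] at hvS
            show (S : Set (Fin m → Fin k)) = shiftOrbit v
            rw [hrO S]
            exact (orbit_eq hm hvS).symm
          · intro habs; exact absurd (Finset.mem_univ S₀) habs
        · have hxv : x v = 0 := by
            have h1 := ker_iterate hxr (Function.minimalPeriod cyclicShift v) v
            rw [Function.iterate_minimalPeriod, hod.neg_one_pow] at h1
            linarith
          rw [hxv]
          symm
          apply Finset.sum_eq_zero
          intro S _
          rw [hb0notmem S v ?_, mul_zero]
          intro hvS
          rw [hrO S] at hvS
          have hEv : Even (Function.minimalPeriod cyclicShift v) := by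
            rw [minPeriod_congr hm hvS]
            exact hre S
          have h1 := Nat.even_iff.mp hEv
          have h2 := Nat.odd_iff.mp hod
          omega
      rw [key]
      exact Submodule.sum_mem _ fun S _ =>
        Submodule.smul_mem _ _ (Submodule.subset_span ⟨S, rfl⟩)
    have hbasis : Module.Basis ↥O ℚ ↥(LinearMap.ker (LinearMap.id + shiftMap k m)) :=
      Module.Basis.mk hli hspan
    rw [Module.finrank_eq_card_basis hbasis, ← Nat.card_coe_set_eq,
      Nat.card_eq_fintype_card]
  · intro hodd
    rw [← LinearMap.ker_eq_bot, eq_bot_iff]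
    intro x hx
    have hx' := (mem_ker_iff x).1 hx
    simp only [Submodule.mem_bot]
    ext v
    have hdvd := minPeriod_dvd hm v
    have hoddd : Odd (Function.minimalPeriod cyclicShift v) := by
      have h2 := Nat.odd_iff.mp hodd
      have h3 := minPeriod_pos hm v
      rcases Nat.even_or_odd (Function.minimalPeriod cyclicShift v) with he | ho
      · exfalso
        have h4 : (2 : ℕ) ∣ m := dvd_trans he.two_dvd hdvd
        omega
      · exact ho
    have h1 := ker_iterate hx' (Function.minimalPeriod cyclicShift v) v
    rw [Function.iterate_minimalPeriod, hoddd.neg_one_pow] at h1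
    simp only [Finsupp.coe_zero, Pi.zero_apply]
    linarith
end
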